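/- arXiv:2107.01479 — 3 statements merged into one kernel-verified Lean document; each statement's English description precedes it below -/
import Mathlib

section
/- Let N ≥ 2, b > 0, and 1 < p < 1 + 2b/(N−1). Then the Gagliardo–Nirenberg quotient is unbounded on H^1(ℝ^N): for every M > 0 there exists a nonzero radial function f ∈ H^1(ℝ^N) with ∫_{ℝ^N} |x|^b |f(x)|^{p+1} dx > M ‖f‖_{H^1}^{p+1}. Equivalently, sup{ (∫ |x|^b |f|^{p+1} dx) / ‖f‖_{H^1}^{p+1} : f ∈ H^1(ℝ^N), f ≠ 0 } = ∞. -/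
open MeasureTheory Filter
open scoped ENNReal NNReal BigOperators

noncomputable section

abbrev Euc (N : ℕ) := EuclideanSpace ℝ (Fin N)

/-- A function on `ℝ^N` is radial if its value depends only on the norm of the argument. -/
def Radial {N : ℕ} {α : Type*} (f : Euc N → α) : Prop :=
  ∀ x y : Euc N, ‖x‖ = ‖y‖ → f x = f y

/-- Membership in `H^1(ℝ^N)`: `f` and its gradient belong to `L²`. -/
def MemH1 {N : ℕ} {F : Type*} [NormedAddCommGroup F] [NormedSpace ℝ F] (f : Euc N → F) : Prop :=
  Differentiable ℝ f ∧ MemLp f 2 volume ∧ MemLp (fun x => fderiv ℝ f x) 2 volume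

/-- `L²` norm. -/
noncomputable def L2norm {N : ℕ} {F : Type*} [NormedAddCommGroup F] (f : Euc N → F) : ℝ :=
  (eLpNorm f 2 volume).toReal

/-- `L²` norm of the gradient: `(∫ |∇f|²)^{1/2}` with `|∇f|² = ∑ᵢ |∂ᵢ f|²`. -/
noncomputable def gradL2norm {N : ℕ} {F : Type*} [NormedAddCommGroup F] [NormedSpace ℝ F]
    (f : Euc N → F) : ℝ :=
  Real.sqrt (∫ x : Euc N, ∑ i : Fin N, ‖fderiv ℝ f x (EuclideanSpace.single i 1)‖ ^ 2)

/-- `H¹` norm: `(‖f‖_{L²}² + ‖∇f‖_{L²}²)^{1/2}`. -/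
noncomputable def H1norm {N : ℕ} {F : Type*} [NormedAddCommGroup F] [NormedSpace ℝ F]
    (f : Euc N → F) : ℝ :=
  Real.sqrt (L2norm f ^ 2 + gradL2norm f ^ 2)

/-!
Fix a bump `φ` on `ℝ` supported in `[-1, 1]` and equal to `1` on `[0, 1/2]`, and put
`f_R x = φ ((‖x‖² - R²) / R)`. For `R ≥ 1`, `f_R` and `∇f_R` are bounded independently of `R` and
vanish outside the shell `R - 1 ≤ ‖x‖ ≤ R + 1`, whose volume is `O(R^(N-1))`; hence
`‖f_R‖_{H¹}^(p+1) = O(R^((N-1)(p+1)/2))`. On the other hand `f_R = 1` on the shell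
`R ≤ ‖x‖ ≤ R + 1/8`, whose volume is `≳ R^(N-1)`, so `∫ ‖x‖^b |f_R|^(p+1) ≳ R^(b+N-1)`. The gap
`b - (N-1)(p-1)/2` between the two exponents is positive exactly when `p < 1 + 2b/(N-1)`.
-/

open Metric Set Module

lemma eventually_mul_rpow_lt_mul_rpow {α β : ℝ} (hαβ : α < β) (K : ℝ) {c : ℝ} (hc : 0 < c) :
    ∀ᶠ R in atTop, K * R ^ α < c * R ^ β := by
  filter_upwards [(tendsto_rpow_atTop (sub_pos.2 hαβ)).eventually_gt_atTop (K / c),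
    eventually_gt_atTop 0] with R hR hR0
  rw [div_lt_iff₀' hc] at hR
  calc K * R ^ α < c * R ^ (β - α) * R ^ α := by gcongr
    _ = c * R ^ β := by rw [mul_assoc, ← Real.rpow_add hR0, sub_add_cancel]

lemma exists_contDiff_bump :
    ∃ φ : ℝ → ℝ, ContDiff ℝ 1 φ ∧ Function.support φ ⊆ Icc (-1) 1 ∧
      ∀ u ∈ Icc (0 : ℝ) (1 / 2), φ u = 1 := by
  let f : ContDiffBump (0 : ℝ) := ⟨1 / 2, 1, by norm_num, by norm_num⟩
  refine ⟨f, f.contDiff, ?_, fun u hu ↦ f.one_of_mem_closedBall ?_⟩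
  · rw [f.support_eq, Real.ball_eq_Ioo]
    norm_num [Ioo_subset_Icc_self]
  · rw [Real.closedBall_eq_Icc]
    exact ⟨by norm_num; linarith [hu.1], by norm_num; linarith [hu.2]⟩

lemma eventually_mul_rpow_lt_of_sq_le_of_le {H I : ℝ → ℝ} {C c m β t : ℝ} (M : ℝ) (hM : 0 ≤ M)
    (hC : 0 ≤ C) (hc : 0 < c) (ht : 0 ≤ t) (hexp : m * t < 2 * β)
    (hH : ∀ᶠ R in atTop, 0 ≤ H R ∧ H R ^ 2 ≤ C * R ^ m)
    (hI : ∀ᶠ R in atTop, c * R ^ β ≤ I R) :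
    ∀ᶠ R in atTop, M * H R ^ t < I R := by
  filter_upwards [eventually_mul_rpow_lt_mul_rpow (by linarith : m * (t / 2) < β)
    (M * C ^ (t / 2)) hc, hH, hI, eventually_gt_atTop 0] with R hR ⟨hH0, hHR⟩ hIR hR0
  calc M * H R ^ t = M * (H R ^ 2) ^ (t / 2) := by
        rw [← Real.rpow_natCast, ← Real.rpow_mul hH0]
        ring_nf
    _ ≤ M * (C * R ^ m) ^ (t / 2) := by gcongr
    _ = M * C ^ (t / 2) * R ^ (m * (t / 2)) := by
        rw [Real.mul_rpow hC (by positivity), ← Real.rpow_mul hR0.le, mul_assoc]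
    _ < c * R ^ β := hR
    _ ≤ I R := hIR

section Annulus

variable {E : Type*} [NormedAddCommGroup E]

def annulus (r s : ℝ) : Set E := closedBall 0 s \ ball 0 r

lemma measurableSet_annulus [MeasurableSpace E] [OpensMeasurableSpace E] (r s : ℝ) :
    MeasurableSet (annulus r s : Set E) :=
  measurableSet_closedBall.diff measurableSet_ball

variable [NormedSpace ℝ E] [FiniteDimensional ℝ E] [Nontrivial E] [MeasurableSpace E]
  [BorelSpace E] (μ : Measure E) [μ.IsAddHaarMeasure]

lemma measure_annulus {r s : ℝ} (hr : 0 ≤ r) (hrs : r ≤ s) :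
    μ (annulus r s) = ENNReal.ofReal (s ^ finrank ℝ E - r ^ finrank ℝ E) * μ (ball 0 1) := by
  rw [annulus, measure_sdiff (ball_subset_closedBall.trans (closedBall_subset_closedBall hrs))
    measurableSet_ball.nullMeasurableSet measure_ball_lt_top.ne,
    Measure.addHaar_closedBall μ 0 (hr.trans hrs), Measure.addHaar_ball μ 0 hr,
    ← ENNReal.sub_mul fun _ _ ↦ measure_ball_lt_top.ne, ENNReal.ofReal_sub _ (by positivity)]

lemma measureReal_annulus {r s : ℝ} (hr : 0 ≤ r) (hrs : r ≤ s) :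
    μ.real (annulus r s) = (s ^ finrank ℝ E - r ^ finrank ℝ E) * μ.real (ball 0 1) := by
  rw [measureReal_def, measure_annulus μ hr hrs, ENNReal.toReal_mul, ENNReal.toReal_ofReal
    (sub_nonneg.2 (pow_le_pow_left₀ hr hrs _)), measureReal_def]

lemma measureReal_annulus_le {r s : ℝ} (hr : 0 ≤ r) (hrs : r ≤ s) :
    μ.real (annulus r s) ≤
      (s - r) * finrank ℝ E * s ^ (finrank ℝ E - 1) * μ.real (ball 0 1) := by
  rw [measureReal_annulus μ hr hrs]
  gcongr
  have := (le_abs_self _).trans (abs_pow_sub_pow_le s r (finrank ℝ E))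
  rwa [abs_of_nonneg (sub_nonneg.2 hrs), abs_of_nonneg hr, abs_of_nonneg (hr.trans hrs),
    max_eq_left hrs] at this

lemma le_measureReal_annulus {r s : ℝ} (hr : 0 ≤ r) (hrs : r ≤ s) :
    (s - r) * s ^ (finrank ℝ E - 1) * μ.real (ball 0 1) ≤ μ.real (annulus r s) := by
  rw [measureReal_annulus μ hr hrs]
  gcongr
  obtain ⟨n, hn⟩ : ∃ n, finrank ℝ E = n + 1 := Nat.exists_eq_add_one.2 finrank_pos
  rw [hn, Nat.add_sub_cancel]
  have := mul_le_mul_of_nonneg_left (pow_le_pow_left₀ hr hrs n) hr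
  rw [pow_succ, pow_succ]
  nlinarith

end Annulus

lemma rpow_mul_measureReal_le_integral_norm_rpow {E F : Type*} [NormedAddCommGroup E]
    [NormedAddCommGroup F] [MeasurableSpace E] [OpensMeasurableSpace E] (μ : Measure E)
    [IsFiniteMeasureOnCompacts μ] {f : E → F} (hf : Continuous f) (hfs : HasCompactSupport f)
    {b s r : ℝ} (hb : 0 ≤ b) (hs : 0 < s) (hr : 0 ≤ r) {S : Set E} (hS : MeasurableSet S)
    (hSf : ∀ x ∈ S, r ≤ ‖x‖ ∧ 1 ≤ ‖f x‖) :
    r ^ b * μ.real S ≤ ∫ x, ‖x‖ ^ b * ‖f x‖ ^ s ∂μ := by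
  set g : E → ℝ := fun x ↦ ‖x‖ ^ b * ‖f x‖ ^ s
  have hg : Integrable g μ := by
    refine Continuous.integrable_of_hasCompactSupport ?_ ?_
    · exact (continuous_norm.rpow_const fun _ ↦ .inr hb).mul
        ((continuous_norm.comp hf).rpow_const fun _ ↦ .inr hs.le)
    · exact (hfs.comp_left (g := fun y ↦ ‖y‖ ^ s) (by simp [hs.ne'])).mul_left
  have hSμ : μ S ≠ ∞ := (measure_mono fun x hx ↦ subset_tsupport f
    (norm_pos_iff.1 (one_pos.trans_le (hSf x hx).2))).trans_lt hfs.measure_lt_top |>.ne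
  calc r ^ b * μ.real S = ∫ _ in S, r ^ b ∂μ := by rw [setIntegral_const, smul_eq_mul, mul_comm]
    _ ≤ ∫ x in S, g x ∂μ :=
        setIntegral_mono_on (integrableOn_const hSμ) hg.integrableOn hS fun x hx ↦
          (mul_one (r ^ b)).symm.trans_le <| mul_le_mul (Real.rpow_le_rpow hr (hSf x hx).1 hb)
            (Real.one_le_rpow (hSf x hx).2 hs.le) zero_le_one (by positivity)
    _ ≤ ∫ x, g x ∂μ := setIntegral_le_integral hg (.of_forall fun x ↦ by positivity)

section SobolevNorms

variable {N : ℕ} {F : Type*} [NormedAddCommGroup F]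

lemma L2norm_sq_le {f : Euc N → F} {S : Set (Euc N)} (hS : MeasurableSet S)
    (hSμ : volume S ≠ ∞) {A : ℝ} (hf : ∀ x, ‖f x‖ ≤ S.indicator (fun _ ↦ A) x) :
    L2norm f ^ 2 ≤ A ^ 2 * volume.real S := by
  have hle : eLpNorm f 2 volume ≤ ‖A‖ₑ * volume S ^ (1 / (2 : ℝ≥0∞).toReal) := by
    rw [← eLpNorm_indicator_const hS two_ne_zero ENNReal.ofNat_ne_top]
    exact eLpNorm_mono_real hf
  have := ENNReal.toReal_mono (by finiteness) hle
  rw [ENNReal.toReal_mul, ← ENNReal.toReal_rpow, toReal_enorm, ENNReal.toReal_ofNat] at this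
  calc L2norm f ^ 2 ≤ (‖A‖ * volume.real S ^ (1 / 2 : ℝ)) ^ 2 :=
        pow_le_pow_left₀ ENNReal.toReal_nonneg this 2
    _ = A ^ 2 * volume.real S := by
        rw [mul_pow, Real.norm_eq_abs, sq_abs, ← Real.sqrt_eq_rpow, Real.sq_sqrt measureReal_nonneg]

variable [NormedSpace ℝ F]

lemma gradL2norm_sq_le {f : Euc N → F} {S : Set (Euc N)} (hS : MeasurableSet S)
    (hSμ : volume S ≠ ∞) {B : ℝ} (hf : ∀ x, ‖fderiv ℝ f x‖ ≤ S.indicator (fun _ ↦ B) x) :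
    gradL2norm f ^ 2 ≤ N * B ^ 2 * volume.real S := by
  have hpt : ∀ x, ∑ i : Fin N, ‖fderiv ℝ f x (EuclideanSpace.single i 1)‖ ^ 2 ≤
      S.indicator (fun _ ↦ N * B ^ 2) x := by
    intro x
    by_cases hx : x ∈ S
    · have hB : ‖fderiv ℝ f x‖ ≤ B := by simpa [hx] using hf x
      rw [indicator_of_mem hx]
      calc ∑ i : Fin N, ‖fderiv ℝ f x (EuclideanSpace.single i 1)‖ ^ 2
          ≤ ∑ _i : Fin N, B ^ 2 := by
            gcongr with i
            have := (fderiv ℝ f x).le_opNorm (EuclideanSpace.single i 1)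
            rw [PiLp.norm_single, norm_one, mul_one] at this
            exact this.trans hB
        _ = N * B ^ 2 := by simp
    · have h0 : fderiv ℝ f x = 0 := norm_le_zero_iff.1 (by simpa [hx] using hf x)
      simp [hx, h0]
  rw [gradL2norm, Real.sq_sqrt (integral_nonneg fun x ↦ by positivity)]
  calc _ ≤ ∫ x, S.indicator (fun _ ↦ (N * B ^ 2 : ℝ)) x :=
        integral_mono_of_nonneg (.of_forall fun x ↦ by positivity)
          ((integrable_indicator_iff hS).2 (integrableOn_const hSμ)) (.of_forall hpt)
    _ = N * B ^ 2 * volume.real S := by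
        rw [integral_indicator_const _ hS, smul_eq_mul, mul_comm]

lemma H1norm_sq (f : Euc N → F) : H1norm f ^ 2 = L2norm f ^ 2 + gradL2norm f ^ 2 :=
  Real.sq_sqrt (by positivity)

lemma memH1_of_contDiff {f : Euc N → F} (hf : ContDiff ℝ 1 f) (hfs : HasCompactSupport f) :
    MemH1 f :=
  ⟨hf.differentiable one_ne_zero, hf.continuous.memLp_of_hasCompactSupport hfs,
    (hf.continuous_fderiv one_ne_zero).memLp_of_hasCompactSupport (hfs.fderiv ℝ)⟩

end SobolevNorms

section Shell

variable {E : Type*} [NormedAddCommGroup E] {R : ℝ} {x : E}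

/-- Written in `‖x‖²` rather than `‖x‖` so that it is smooth at the origin. -/
def shellCoord (R : ℝ) (x : E) : ℝ := (‖x‖ ^ 2 - R ^ 2) / R

lemma mem_annulus_of_abs_shellCoord_le (hR : 1 ≤ R) (hx : |shellCoord R x| ≤ 1) :
    x ∈ annulus (R - 1) (R + 1) := by
  have hR0 : 0 < R := one_pos.trans_le hR
  rw [shellCoord, abs_div, abs_of_pos hR0, div_le_one hR0, abs_le] at hx
  simp only [annulus, Set.mem_sdiff, mem_closedBall, mem_ball, dist_zero_right, not_lt]
  constructor <;> nlinarith [norm_nonneg x]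

lemma shellCoord_mem_Icc_of_mem_annulus (hR : 1 ≤ R) (hx : x ∈ annulus R (R + 1 / 8)) :
    shellCoord R x ∈ Icc 0 (1 / 2) := by
  have hR0 : 0 < R := one_pos.trans_le hR
  simp only [annulus, Set.mem_sdiff, mem_closedBall, mem_ball, dist_zero_right, not_lt] at hx
  rw [shellCoord, mem_Icc, le_div_iff₀ hR0, div_le_iff₀ hR0]
  constructor <;> nlinarith

def shellBump (φ : ℝ → ℝ) (R : ℝ) (x : E) : ℂ := φ (shellCoord R x)

variable {φ : ℝ → ℝ}

lemma radial_shellBump {N : ℕ} : Radial (shellBump φ R : Euc N → ℂ) :=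
  fun x y h ↦ by simp only [shellBump, shellCoord, h]

lemma shellBump_ne_zero [NormedSpace ℝ E] [Nontrivial E] (hφ : φ 0 ≠ 0) (hR : 0 ≤ R) :
    (shellBump φ R : E → ℂ) ≠ 0 := by
  obtain ⟨x, hx⟩ := exists_norm_eq E hR
  refine fun h ↦ hφ ?_
  simpa [shellBump, shellCoord, hx] using congrFun h x

lemma shellCoord_notMem_Icc (hR : 1 ≤ R) (hx : x ∉ annulus (R - 1) (R + 1)) :
    shellCoord R x ∉ Icc (-1) 1 :=
  fun h ↦ hx (mem_annulus_of_abs_shellCoord_le hR (abs_le.2 h))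

lemma shellBump_eq_zero (hsupp : Function.support φ ⊆ Icc (-1) 1) (hR : 1 ≤ R)
    (hx : x ∉ annulus (R - 1) (R + 1)) : shellBump φ R x = 0 := by
  rw [shellBump, Function.notMem_support.1 fun h ↦ shellCoord_notMem_Icc hR hx (hsupp h),
    Complex.ofReal_zero]

lemma norm_shellBump_le (hsupp : Function.support φ ⊆ Icc (-1) 1) (hR : 1 ≤ R)
    {A : ℝ} (hA : ∀ u, |φ u| ≤ A) (x : E) :
    ‖shellBump φ R x‖ ≤ (annulus (R - 1) (R + 1)).indicator (fun _ ↦ A) x := by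
  by_cases hx : x ∈ annulus (R - 1) (R + 1)
  · simpa [shellBump, hx] using hA _
  · simp [hx, shellBump_eq_zero hsupp hR hx]

lemma hasCompactSupport_shellBump [ProperSpace E] (hsupp : Function.support φ ⊆ Icc (-1) 1)
    (hR : 1 ≤ R) : HasCompactSupport (shellBump φ R : E → ℂ) :=
  HasCompactSupport.intro (isCompact_closedBall 0 (R + 1)) fun _ hx ↦
    shellBump_eq_zero hsupp hR fun h ↦ hx h.1

variable [InnerProductSpace ℝ E]

lemma contDiff_shellCoord {n : WithTop ℕ∞} (R : ℝ) : ContDiff ℝ n (shellCoord R : E → ℝ) :=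
  ((contDiff_norm_sq ℝ).sub contDiff_const).div_const R

lemma hasFDerivAt_shellCoord (R : ℝ) (x : E) :
    HasFDerivAt (shellCoord R) (R⁻¹ • 2 • innerSL ℝ x) x := by
  have h : shellCoord R = fun y : E ↦ R⁻¹ • (‖y‖ ^ 2 - R ^ 2) :=
    funext fun y ↦ by rw [shellCoord, div_eq_inv_mul, smul_eq_mul]
  rw [h]
  exact ((hasStrictFDerivAt_norm_sq x).hasFDerivAt.sub_const (R ^ 2)).const_smul R⁻¹

lemma contDiff_shellBump (hφ : ContDiff ℝ 1 φ) (R : ℝ) : ContDiff ℝ 1 (shellBump φ R : E → ℂ) :=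
  Complex.ofRealCLM.contDiff.comp (hφ.comp (contDiff_shellCoord R))

lemma hasFDerivAt_shellBump (hφ : Differentiable ℝ φ) (R : ℝ) (x : E) :
    HasFDerivAt (shellBump φ R)
      (Complex.ofRealCLM.comp (deriv φ (shellCoord R x) • R⁻¹ • 2 • innerSL ℝ x)) x :=
  Complex.ofRealCLM.hasFDerivAt.comp x
    ((hφ _).hasDerivAt.comp_hasFDerivAt x (hasFDerivAt_shellCoord R x))

lemma norm_fderiv_shellBump_le (hφ : Differentiable ℝ φ)
    (hsupp : Function.support φ ⊆ Icc (-1) 1) (hR : 1 ≤ R) {B : ℝ}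
    (hB : ∀ u, |deriv φ u| ≤ B) (x : E) :
    ‖fderiv ℝ (shellBump φ R) x‖ ≤ (annulus (R - 1) (R + 1)).indicator (fun _ ↦ 4 * B) x := by
  have hR0 : 0 < R := one_pos.trans_le hR
  rw [(hasFDerivAt_shellBump hφ R x).fderiv]
  by_cases hx : x ∈ annulus (R - 1) (R + 1)
  · have hxR : ‖x‖ ≤ 2 * R := by
      have := hx.1
      rw [mem_closedBall, dist_zero_right] at this
      linarith
    rw [indicator_of_mem hx]
    calc _ ≤ ‖Complex.ofRealCLM‖ * ‖deriv φ (shellCoord R x) • R⁻¹ • 2 • innerSL ℝ x‖ :=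
          ContinuousLinearMap.opNorm_comp_le _ _
      _ = |deriv φ (shellCoord R x)| * (R⁻¹ * (2 * ‖x‖)) := by
          simp [Complex.ofRealCLM_norm, norm_smul, RCLike.norm_nsmul ℝ, abs_of_pos hR0]
      _ ≤ B * (R⁻¹ * (2 * (2 * R))) := by
          gcongr
          exacts [(abs_nonneg _).trans (hB 0), hB _]
      _ = 4 * B := by field_simp; ring
  · have hderiv : deriv φ (shellCoord R x) = 0 := Function.notMem_support.1 fun h ↦
      shellCoord_notMem_Icc hR hx (closure_minimal hsupp isClosed_Icc (support_deriv_subset h))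
    simp [hx, hderiv]

end Shell

section Estimates

variable {N : ℕ} {φ : ℝ → ℝ}

lemma nontrivial_euc (hN : 0 < N) : Nontrivial (Euc N) :=
  Module.nontrivial_of_finrank_pos (by rwa [finrank_euclideanSpace_fin])

lemma exists_H1norm_shellBump_sq_le (hN : 0 < N) (hφ : ContDiff ℝ 1 φ)
    (hsupp : Function.support φ ⊆ Icc (-1) 1) :
    ∃ C, 0 ≤ C ∧ ∀ R ≥ 1, H1norm (shellBump φ R : Euc N → ℂ) ^ 2 ≤ C * R ^ (N - 1) := by
  have := nontrivial_euc hN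
  have hc : HasCompactSupport φ :=
    isCompact_Icc.of_isClosed_subset (isClosed_tsupport φ) (closure_minimal hsupp isClosed_Icc)
  obtain ⟨A, hA⟩ := hφ.continuous.bounded_above_of_compact_support hc
  obtain ⟨B, hB⟩ := (hφ.continuous_deriv le_rfl).bounded_above_of_compact_support hc.deriv
  set ω := volume.real (ball (0 : Euc N) 1)
  refine ⟨(A ^ 2 + N * (4 * B) ^ 2) * (2 * N * 2 ^ (N - 1) * ω), by positivity, fun R hR ↦ ?_⟩
  set S : Set (Euc N) := annulus (R - 1) (R + 1)
  have hSμ : volume S ≠ ∞ := ((measure_mono sdiff_subset).trans_lt measure_closedBall_lt_top).ne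
  have hS : volume.real S ≤ 2 * N * 2 ^ (N - 1) * ω * R ^ (N - 1) := by
    have := measureReal_annulus_le (volume : Measure (Euc N)) (by linarith)
      (by linarith : R - 1 ≤ R + 1)
    rw [finrank_euclideanSpace_fin, show R + 1 - (R - 1) = 2 by ring] at this
    calc volume.real S ≤ 2 * N * (R + 1) ^ (N - 1) * ω := this
      _ ≤ 2 * N * (2 * R) ^ (N - 1) * ω := by gcongr; linarith
      _ = 2 * N * 2 ^ (N - 1) * ω * R ^ (N - 1) := by ring
  calc H1norm (shellBump φ R : Euc N → ℂ) ^ 2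
      = L2norm (shellBump φ R : Euc N → ℂ) ^ 2 + gradL2norm (shellBump φ R : Euc N → ℂ) ^ 2 :=
        H1norm_sq _
    _ ≤ A ^ 2 * volume.real S + N * (4 * B) ^ 2 * volume.real S :=
        add_le_add (L2norm_sq_le (measurableSet_annulus _ _) hSμ
            (norm_shellBump_le hsupp hR fun u ↦ by simpa using hA u))
          (gradL2norm_sq_le (measurableSet_annulus _ _) hSμ
            (norm_fderiv_shellBump_le (hφ.differentiable one_ne_zero) hsupp hR
              fun u ↦ by simpa using hB u))
    _ = (A ^ 2 + N * (4 * B) ^ 2) * volume.real S := by ring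
    _ ≤ (A ^ 2 + N * (4 * B) ^ 2) * (2 * N * 2 ^ (N - 1) * ω) * R ^ (N - 1) := by
        rw [mul_assoc]; gcongr

lemma exists_le_integral_shellBump (hN : 0 < N) (hφ : Continuous φ)
    (hsupp : Function.support φ ⊆ Icc (-1) 1) (hone : ∀ u ∈ Icc (0 : ℝ) (1 / 2), φ u = 1)
    {b s : ℝ} (hb : 0 ≤ b) (hs : 0 < s) :
    ∃ c > 0, ∀ R ≥ 1,
      c * R ^ b * R ^ (N - 1) ≤ ∫ x : Euc N, ‖x‖ ^ b * ‖shellBump φ R x‖ ^ s := by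
  have := nontrivial_euc hN
  set ω := volume.real (ball (0 : Euc N) 1)
  have hω : 0 < ω := ENNReal.toReal_pos (measure_ball_pos volume 0 one_pos).ne'
    measure_ball_lt_top.ne
  refine ⟨ω / 8, by positivity, fun R hR ↦ ?_⟩
  have hR0 : 0 ≤ R := zero_le_one.trans hR
  have hcont : Continuous (shellBump φ R : Euc N → ℂ) :=
    Complex.continuous_ofReal.comp (hφ.comp (contDiff_shellCoord (n := 0) R).continuous)
  have hS := le_measureReal_annulus (volume : Measure (Euc N)) hR0 (by linarith : R ≤ R + 1 / 8)
  rw [finrank_euclideanSpace_fin] at hS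
  calc ω / 8 * R ^ b * R ^ (N - 1) = R ^ b * ((R + 1 / 8 - R) * R ^ (N - 1) * ω) := by ring
    _ ≤ R ^ b * ((R + 1 / 8 - R) * (R + 1 / 8) ^ (N - 1) * ω) := by
        gcongr <;> linarith
    _ ≤ R ^ b * volume.real (annulus R (R + 1 / 8) : Set (Euc N)) := by gcongr
    _ ≤ ∫ x : Euc N, ‖x‖ ^ b * ‖shellBump φ R x‖ ^ s :=
        rpow_mul_measureReal_le_integral_norm_rpow volume hcont
          (hasCompactSupport_shellBump hsupp hR) hb hs hR0 (measurableSet_annulus _ _)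
          fun x hx ↦ ⟨by simpa using hx.2, by
            simp [shellBump, hone _ (shellCoord_mem_Icc_of_mem_annulus hR hx)]⟩

end Estimates

/-- For `1 < p < 1 + 2b/(N-1)` the Gagliardo–Nirenberg quotient is unbounded on radial `H¹`
(Lemma 2.5 of the paper). -/
theorem gagliardo_nirenberg_quotient_unbounded (N : ℕ) (b p : ℝ) (hN : 2 ≤ N) (hb : 0 < b)
    (hp1 : 1 < p) (hp2 : p < 1 + 2 * b / ((N : ℝ) - 1)) :
    ∀ M : ℝ, 0 < M → ∃ f : Euc N → ℂ, Radial f ∧ MemH1 f ∧ f ≠ 0 ∧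
      M * H1norm f ^ (p + 1) < ∫ x : Euc N, ‖x‖ ^ b * ‖f x‖ ^ (p + 1) := by
  intro M hM
  have := nontrivial_euc (N := N) (by omega)
  obtain ⟨φ, hφ, hsupp, hone⟩ := exists_contDiff_bump
  obtain ⟨C, hC0, hC⟩ := exists_H1norm_shellBump_sq_le (N := N) (by omega) hφ hsupp
  obtain ⟨c, hc, hc'⟩ := exists_le_integral_shellBump (N := N) (by omega) hφ.continuous hsupp
    hone hb.le (by linarith : 0 < p + 1)
  set m : ℝ := (N : ℝ) - 1
  have hm : 0 < m := by
    have : (2 : ℝ) ≤ N := by exact_mod_cast hN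
    linarith
  have hRm (R : ℝ) : R ^ (N - 1) = R ^ m := by
    rw [← Real.rpow_natCast, Nat.cast_sub (by omega : 1 ≤ N), Nat.cast_one]
  have hexp : m * (p + 1) < 2 * (b + m) := by
    have := (lt_div_iff₀ hm).1 (by linarith : p - 1 < 2 * b / m)
    linarith
  have hH : ∀ᶠ R in atTop, 0 ≤ H1norm (shellBump φ R : Euc N → ℂ) ∧
      H1norm (shellBump φ R : Euc N → ℂ) ^ 2 ≤ C * R ^ m :=
    eventually_ge_atTop 1 |>.mono fun R hR ↦ ⟨Real.sqrt_nonneg _, hRm R ▸ hC R hR⟩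
  have hI : ∀ᶠ R in atTop,
      c * R ^ (b + m) ≤ ∫ x : Euc N, ‖x‖ ^ b * ‖shellBump φ R x‖ ^ (p + 1) :=
    eventually_ge_atTop 1 |>.mono fun R hR ↦ by
      rw [Real.rpow_add (one_pos.trans_le hR), ← hRm, ← mul_assoc]
      exact hc' R hR
  obtain ⟨R, hR, hR1⟩ := ((eventually_mul_rpow_lt_of_sq_le_of_le M hM.le hC0 hc (by linarith)
    hexp hH hI).and (eventually_ge_atTop 1)).exists
  exact ⟨shellBump φ R, radial_shellBump, memH1_of_contDiff (contDiff_shellBump hφ R)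
    (hasCompactSupport_shellBump hsupp hR1),
    shellBump_ne_zero (by rw [hone 0 (by norm_num)]; exact one_ne_zero) (by linarith), hR⟩
end
end

section
/- Let N ≥ 2, b > 0, and p > 1 with (N−1)(p−1) > 2b. Then there exists C = C(N,p,b) > 0 such that for every radial function f ∈ H^1(ℝ^N) and every R > 0, ∫_{|x| ≥ R} |x|^b |f(x)|^{p+1} dx ≤ C R^{b − (N−1)(p−1)/2} ‖∇f‖_{L²}^{(p−1)/2} ‖f‖_{L²}^{(p+3)/2}. -/
open MeasureTheory Filter
open scoped ENNReal NNReal BigOperators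

noncomputable section

/-!
Strauss' radial lemma drives the estimate. Write a radial `f` as `f x = g ‖x‖`. Since
`s ^ (N-1) * ‖g s‖ ^ 2` is integrable on `(0, ∞)`, it is small at arbitrarily large `s`, so
integrating its derivative from `r` outwards gives
`r ^ (N-1) * ‖g r‖ ^ 2 ≤ 2 ∫_r^∞ s ^ (N-1) ‖g‖ ‖g'‖ ds`. By Cauchy–Schwarz and polar
coordinates the right side is at most a constant times `‖f‖₂ ‖∇f‖₂`, because `g'(‖x‖)` is the
derivative of `f` at `x` in the unit direction `x / ‖x‖`. On `{R ≤ ‖x‖}` write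
`|f| ^ (p+1) = |f| ^ (p-1) * |f| ^ 2` and bound `|f| ^ (p-1)` by this decay: the leftover power
of `‖x‖` has exponent `b - (N-1)(p-1)/2 ≤ 0`, so it is at most its value at `R`, and
integrating `|f| ^ 2` finishes.
-/

open Set Metric

def radialMeasure (k : ℕ) : Measure ℝ :=
  (volume.restrict (Ioi 0)).withDensity fun r => ENNReal.ofReal (r ^ k)

section Polar

variable {E : Type*} [NormedAddCommGroup E] [NormedSpace ℝ E] [MeasurableSpace E]
  [Nontrivial E] [FiniteDimensional ℝ E] [BorelSpace E] (μ : Measure E) [μ.IsAddHaarMeasure]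

local notation "dim" => Module.finrank ℝ

theorem lintegral_fun_norm_addHaar {f : ℝ → ℝ≥0∞} (hf : Measurable f) :
    ∫⁻ x, f ‖x‖ ∂μ = dim E * μ (ball 0 1) * ∫⁻ r, f r ∂radialMeasure (dim E - 1) := by
  calc
    ∫⁻ x, f ‖x‖ ∂μ = ∫⁻ x : ({(0)}ᶜ : Set E), f ‖x.1‖ ∂(μ.comap (↑)) := by
      rw [lintegral_subtype_comap (measurableSet_singleton _).compl fun x ↦ f ‖x‖,
        restrict_compl_singleton]
    _ = ∫⁻ x : sphere (0 : E) 1 × Ioi (0 : ℝ), f x.2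
        ∂μ.toSphere.prod (.volumeIoiPow (dim E - 1)) := by
      rw [← μ.measurePreserving_homeomorphUnitSphereProd.lintegral_comp
        (f := fun x => f x.2.1) (by fun_prop)]
      simp only [homeomorphUnitSphereProd_apply_snd_coe]
    _ = μ.toSphere univ * ∫⁻ x : Ioi (0 : ℝ), f x ∂(Measure.volumeIoiPow (dim E - 1)) := by
      rw [lintegral_prod _ (by fun_prop)]
      simp [lintegral_const, mul_comm]
    _ = _ := by
      rw [μ.toSphere_apply_univ, Measure.volumeIoiPow, radialMeasure,
        lintegral_withDensity_eq_lintegral_mul _ (by fun_prop) (by fun_prop),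
        lintegral_withDensity_eq_lintegral_mul _ (by fun_prop) hf]
      exact congrArg _ (lintegral_subtype_comap measurableSet_Ioi
        (fun r => ENNReal.ofReal (r ^ (dim E - 1)) * f r))

variable {F : Type*} [NormedAddCommGroup F]

theorem eLpNorm_fun_norm_addHaar {g : ℝ → F} (hg : Measurable fun r => ‖g r‖ₑ) {p : ℝ≥0∞}
    (hp0 : p ≠ 0) (hp : p ≠ ∞) :
    eLpNorm (fun x => g ‖x‖) p μ =
      (dim E * μ (ball 0 1)) ^ (1 / p.toReal) * eLpNorm g p (radialMeasure (dim E - 1)) := by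
  rw [eLpNorm_eq_lintegral_rpow_enorm_toReal hp0 hp, eLpNorm_eq_lintegral_rpow_enorm_toReal hp0 hp,
    lintegral_fun_norm_addHaar μ (f := fun r => ‖g r‖ₑ ^ p.toReal) (by fun_prop),
    ENNReal.mul_rpow_of_nonneg _ _ (by positivity)]

end Polar

theorem setLIntegral_Ioi_radialMeasure (k : ℕ) {r : ℝ} (hr : 0 ≤ r) (φ : ℝ → ℝ≥0∞) :
    ∫⁻ s in Ioi r, φ s ∂radialMeasure k = ∫⁻ s in Ioi r, ENNReal.ofReal (s ^ k) * φ s := by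
  rw [radialMeasure, restrict_withDensity measurableSet_Ioi, Measure.restrict_restrict
    measurableSet_Ioi, Ioi_inter_Ioi, sup_eq_left.2 hr,
    lintegral_withDensity_eq_lintegral_mul_non_measurable _ (by fun_prop)
      (.of_forall fun _ => ENNReal.ofReal_lt_top)]
  rfl

theorem exists_le_of_setLIntegral_Ioi_ne_top {h : ℝ → ℝ} {r ε : ℝ} (hε : 0 < ε)
    (hh : ∫⁻ s in Ioi r, ENNReal.ofReal (h s) ≠ ∞) : ∃ T, r ≤ T ∧ h T ≤ ε := by
  by_contra! hlarge
  refine hh (top_le_iff.1 ?_)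
  calc ∞ = ∫⁻ _ in Ioi r, ENNReal.ofReal ε := by simp [hε]
    _ ≤ ∫⁻ s in Ioi r, ENNReal.ofReal (h s) :=
      setLIntegral_mono' measurableSet_Ioi fun s hs =>
        ENNReal.ofReal_le_ofReal (hlarge s (le_of_lt hs)).le

theorem eLpNorm_two_sq {α F : Type*} [MeasurableSpace α] [NormedAddCommGroup F] (f : α → F)
    (μ : Measure α) : eLpNorm f 2 μ ^ 2 = ∫⁻ x, ‖f x‖ₑ ^ 2 ∂μ := by
  simpa using eLpNorm_nnreal_pow_eq_lintegral (f := f) (μ := μ) (p := 2) two_ne_zero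

section Strauss

variable {F : Type*} [NormedAddCommGroup F] [InnerProductSpace ℝ F]

theorem aestronglyMeasurable_of_forall_hasDerivAt [CompleteSpace F] {g g' : ℝ → F}
    (hg : ∀ s, HasDerivAt g (g' s) s) (μ : Measure ℝ) : AEStronglyMeasurable g' μ :=
  funext (fun s => (hg s).deriv) ▸ aestronglyMeasurable_deriv g μ

theorem pow_mul_norm_sq_sub_le_two_mul_integral (k : ℕ) {g g' : ℝ → F}
    (hg : ∀ s, HasDerivAt g (g' s) s) {r T : ℝ} (hr : 0 < r) (hT : r ≤ T)
    (hψ : IntegrableOn (fun s => s ^ k * (‖g s‖ * ‖g' s‖)) (Ioi r)) :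
    r ^ k * ‖g r‖ ^ 2 - T ^ k * ‖g T‖ ^ 2 ≤ 2 * ∫ s in Ioi r, s ^ k * (‖g s‖ * ‖g' s‖) := by
  have h_deriv : ∀ s, HasDerivAt (fun s => s ^ k * ‖g s‖ ^ 2)
      (k * s ^ (k - 1) * ‖g s‖ ^ 2 + s ^ k * (2 * inner ℝ (g s) (g' s))) s :=
    fun s => (hasDerivAt_pow k s).mul (hg s).norm_sq
  have h_slope : ∀ s ∈ Ioo r T, -(k * s ^ (k - 1) * ‖g s‖ ^ 2 + s ^ k * (2 * inner ℝ (g s) (g' s)))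
      ≤ 2 * (s ^ k * (‖g s‖ * ‖g' s‖)) := by
    intro s hs
    have hs0 : 0 < s := hr.trans hs.1
    have h_inner : -inner ℝ (g s) (g' s) ≤ ‖g s‖ * ‖g' s‖ :=
      (neg_le_abs _).trans (abs_real_inner_le_norm _ _)
    have : 0 ≤ k * s ^ (k - 1) * ‖g s‖ ^ 2 := by positivity
    nlinarith [pow_pos hs0 k]
  have hFTC := intervalIntegral.sub_le_integral_of_hasDeriv_right_of_le hT
    (fun s _ => (h_deriv s).continuousAt.neg.continuousWithinAt)
    (fun s _ => (h_deriv s).neg.hasDerivWithinAt)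
    ((integrableOn_Icc_iff_integrableOn_Ioc).mpr ((hψ.mono_set Ioc_subset_Ioi_self).const_mul 2))
    h_slope
  have h_tail : ∫ s in r..T, s ^ k * (‖g s‖ * ‖g' s‖) ≤ ∫ s in Ioi r, s ^ k * (‖g s‖ * ‖g' s‖) := by
    rw [intervalIntegral.integral_of_le hT]
    refine setIntegral_mono_set hψ ?_ Ioc_subset_Ioi_self.eventuallyLE
    filter_upwards [ae_restrict_mem measurableSet_Ioi] with s (hs : r < s)
    have : 0 < s := hr.trans hs
    positivity
  rw [intervalIntegral.integral_const_mul, Pi.neg_apply, Pi.neg_apply] at hFTC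
  linarith

theorem pow_mul_norm_sq_le_two_mul_setLIntegral [CompleteSpace F] (k : ℕ) {g g' : ℝ → F}
    (hg : ∀ s, HasDerivAt g (g' s) s) (hfin : ∫⁻ s, ‖g s‖ₑ ^ 2 ∂radialMeasure k ≠ ∞)
    {r : ℝ} (hr : 0 < r) :
    ENNReal.ofReal (r ^ k * ‖g r‖ ^ 2) ≤
      2 * ∫⁻ s in Ioi r, ‖g s‖ₑ * ‖g' s‖ₑ ∂radialMeasure k := by
  set ψ : ℝ → ℝ := fun s => s ^ k * (‖g s‖ * ‖g' s‖)
  have hψ_nonneg : ∀ᵐ s ∂volume.restrict (Ioi r), 0 ≤ ψ s := by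
    filter_upwards [ae_restrict_mem measurableSet_Ioi] with s (hs : r < s)
    have : 0 < s := hr.trans hs
    positivity
  have hψ_eq : ∫⁻ s in Ioi r, ‖g s‖ₑ * ‖g' s‖ₑ ∂radialMeasure k =
      ∫⁻ s in Ioi r, ENNReal.ofReal (ψ s) := by
    rw [setLIntegral_Ioi_radialMeasure k hr.le]
    refine setLIntegral_congr_fun measurableSet_Ioi fun s hs => ?_
    rw [ENNReal.ofReal_mul (pow_nonneg (hr.trans hs).le k), ENNReal.ofReal_mul (norm_nonneg _),
      ofReal_norm, ofReal_norm]
  have h_fin : ∫⁻ s in Ioi r, ENNReal.ofReal (s ^ k * ‖g s‖ ^ 2) ≠ ∞ := by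
    refine ne_top_of_le_ne_top hfin (le_trans (le_of_eq ?_) (setLIntegral_le_lintegral (Ioi r) _))
    rw [setLIntegral_Ioi_radialMeasure k hr.le]
    refine setLIntegral_congr_fun measurableSet_Ioi fun s hs => ?_
    rw [ENNReal.ofReal_mul (pow_nonneg (hr.trans hs).le k), ← ofReal_norm,
      ← ENNReal.ofReal_pow (norm_nonneg _)]
  rw [hψ_eq]
  by_cases hJ : ∫⁻ s in Ioi r, ENNReal.ofReal (ψ s) = ∞
  · simp [hJ]
  have hg_cont : Continuous g := continuous_iff_continuousAt.2 fun s => (hg s).continuousAt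
  have hψ_int : IntegrableOn ψ (Ioi r) := by
    refine (lintegral_ofReal_ne_top_iff_integrable ?_ hψ_nonneg).1 hJ
    exact (by fun_prop : Continuous fun s : ℝ => s ^ k).aestronglyMeasurable.mul
      (hg_cont.norm.aestronglyMeasurable.mul
        (aestronglyMeasurable_of_forall_hasDerivAt hg _).norm)
  rw [← ofReal_integral_eq_lintegral_ofReal hψ_int hψ_nonneg, ← ENNReal.ofReal_ofNat 2,
    ← ENNReal.ofReal_mul zero_le_two]
  refine ENNReal.ofReal_le_ofReal (le_of_forall_pos_le_add fun ε hε => ?_)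
  obtain ⟨T, hrT, hT⟩ := exists_le_of_setLIntegral_Ioi_ne_top hε h_fin
  linarith [pow_mul_norm_sq_sub_le_two_mul_integral k hg hr hrT hψ_int]

theorem pow_mul_norm_sq_le_two_mul_eLpNorm_mul_eLpNorm [CompleteSpace F] (k : ℕ) {g g' : ℝ → F}
    (hg : ∀ s, HasDerivAt g (g' s) s) (hfin : eLpNorm g 2 (radialMeasure k) ≠ ∞)
    {r : ℝ} (hr : 0 < r) :
    ENNReal.ofReal (r ^ k * ‖g r‖ ^ 2) ≤
      2 * (eLpNorm g 2 (radialMeasure k) * eLpNorm g' 2 (radialMeasure k)) := by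
  have hg_meas : AEStronglyMeasurable g (radialMeasure k) :=
    (continuous_iff_continuousAt.2 fun s => (hg s).continuousAt).aestronglyMeasurable
  have h_holder : eLpNorm (fun s => ‖g s‖ * ‖g' s‖) 1 (radialMeasure k) ≤
      1 * eLpNorm g 2 (radialMeasure k) * eLpNorm g' 2 (radialMeasure k) :=
    eLpNorm_le_eLpNorm_mul_eLpNorm_of_nnnorm hg_meas
      (aestronglyMeasurable_of_forall_hasDerivAt hg _) (fun a b => ‖a‖ * ‖b‖) 1
      (.of_forall fun s => by simp [nnnorm_mul])
  rw [one_mul, eLpNorm_one_eq_lintegral_enorm] at h_holder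
  refine (pow_mul_norm_sq_le_two_mul_setLIntegral k hg
    (eLpNorm_two_sq g _ ▸ ENNReal.pow_ne_top hfin) hr).trans
    (mul_le_mul_right ((setLIntegral_le_lintegral _ _).trans (le_of_eq_of_le ?_ h_holder)) 2)
  simp [enorm_mul]

end Strauss

theorem OrthonormalBasis.norm_apply_sq_le {ι E F : Type*} [Fintype ι] [NormedAddCommGroup E]
    [InnerProductSpace ℝ E] [NormedAddCommGroup F] [NormedSpace ℝ F] (b : OrthonormalBasis ι ℝ E)
    (L : E →L[ℝ] F) (v : E) : ‖L v‖ ^ 2 ≤ ‖v‖ ^ 2 * ∑ i, ‖L (b i)‖ ^ 2 := by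
  have h_tri : ‖L v‖ ≤ ∑ i, ‖b.repr v i‖ * ‖L (b i)‖ := by
    conv_lhs => rw [← b.sum_repr v]
    simpa only [map_sum, map_smul, norm_smul] using
      norm_sum_le Finset.univ fun i => b.repr v i • L (b i)
  calc ‖L v‖ ^ 2 ≤ (∑ i, ‖b.repr v i‖ * ‖L (b i)‖) ^ 2 := by gcongr
    _ ≤ (∑ i, ‖b.repr v i‖ ^ 2) * ∑ i, ‖L (b i)‖ ^ 2 := Finset.sum_mul_sq_le_sq_mul_sq _ _ _
    _ = ‖v‖ ^ 2 * ∑ i, ‖L (b i)‖ ^ 2 := by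
      rw [← EuclideanSpace.norm_sq_eq, LinearIsometryEquiv.norm_map]

theorem gradL2norm_nonneg {N : ℕ} {F : Type*} [NormedAddCommGroup F] [NormedSpace ℝ F]
    (f : Euc N → F) : 0 ≤ gradL2norm f :=
  Real.sqrt_nonneg _

theorem eLpNorm_fderiv_apply_le_gradL2norm {N : ℕ} {F : Type*} [NormedAddCommGroup F]
    [NormedSpace ℝ F] {f : Euc N → F} (hf : MemLp (fun x => fderiv ℝ f x) 2 volume)
    {u : Euc N → Euc N} (hu : ∀ x, ‖u x‖ ≤ 1) :
    eLpNorm (fun x => fderiv ℝ f x (u x)) 2 volume ≤ ENNReal.ofReal (gradL2norm f) := by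
  set G : Euc N → ℝ := fun x => ∑ i : Fin N, ‖fderiv ℝ f x (EuclideanSpace.single i 1)‖ ^ 2
  have hG_int : Integrable G := by
    refine integrable_finsetSum _ fun i _ => ?_
    refine (hf.integrable_norm_pow two_ne_zero).mono
      (((ContinuousLinearMap.apply ℝ F _).continuous.comp_aestronglyMeasurable hf.1).norm.pow 2) ?_
    refine .of_forall fun x => ?_
    simp only [norm_pow, norm_norm]
    gcongr
    simpa using (fderiv ℝ f x).le_opNorm (EuclideanSpace.single i 1)
  have h_pt : ∀ x, ‖fderiv ℝ f x (u x)‖ₑ ^ 2 ≤ ENNReal.ofReal (G x) := fun x => by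
    rw [← ofReal_norm, ← ENNReal.ofReal_pow (norm_nonneg _)]
    refine ENNReal.ofReal_le_ofReal
      ((OrthonormalBasis.norm_apply_sq_le (EuclideanSpace.basisFun _ ℝ) _ _).trans ?_)
    simpa using mul_le_of_le_one_left (by positivity) (pow_le_one₀ (norm_nonneg _) (hu x))
  rw [← ENNReal.pow_le_pow_left_iff two_ne_zero, gradL2norm,
    ← ENNReal.ofReal_pow (Real.sqrt_nonneg _),
    Real.sq_sqrt (integral_nonneg fun x => by positivity),
    ofReal_integral_eq_lintegral_ofReal hG_int (.of_forall fun x => by positivity),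
    eLpNorm_two_sq]
  exact lintegral_mono h_pt

theorem Radial.hasDerivAt_smul {N : ℕ} {F : Type*} [NormedAddCommGroup F] [NormedSpace ℝ F]
    {f : Euc N → F} (hf : Radial f) (hdf : Differentiable ℝ f) {e u : Euc N} (he : ‖e‖ = 1)
    (hu : ‖u‖ = 1) (s : ℝ) : HasDerivAt (fun t : ℝ => f (t • e)) (fderiv ℝ f (s • u) u) s := by
  have h_eq : (fun t : ℝ => f (t • e)) = fun t => f (t • u) :=
    funext fun t => hf _ _ (by simp [norm_smul, he, hu])
  rw [h_eq]
  simpa [Function.comp_def] using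
    (hdf (s • u)).hasFDerivAt.comp_hasDerivAt s ((hasDerivAt_id s).smul_const u)

theorem exists_norm_eq_one_smul_eq {E : Type*} [NormedAddCommGroup E] [NormedSpace ℝ E]
    [Nontrivial E] (x : E) : ∃ u : E, ‖u‖ = 1 ∧ ‖x‖ • u = x := by
  rcases eq_or_ne x 0 with rfl | hx
  · obtain ⟨u, hu⟩ := exists_norm_eq E zero_le_one
    exact ⟨u, hu, by simp⟩
  · exact ⟨‖x‖⁻¹ • x, norm_smul_inv_norm hx, by simp [smul_smul, hx]⟩

section Radial

variable {N : ℕ} {F : Type*} [NormedAddCommGroup F]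

theorem Radial.eLpNorm_eq {f : Euc N → F} (hf : Radial f) (hmeas : Measurable fun x => ‖f x‖ₑ)
    {e : Euc N} (he : ‖e‖ = 1) {p : ℝ≥0∞} (hp0 : p ≠ 0) (hp : p ≠ ∞) :
    eLpNorm f p volume = (N * volume (ball (0 : Euc N) 1)) ^ (1 / p.toReal) *
      eLpNorm (fun s : ℝ => f (s • e)) p (radialMeasure (N - 1)) := by
  have : Nontrivial (Euc N) := nontrivial_of_ne e 0 (by rintro rfl; simp at he)
  have hfe : f = fun x => f (‖x‖ • e) := funext fun x => hf _ _ (by simp [norm_smul, he])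
  conv_lhs => rw [hfe]
  simpa only [finrank_euclideanSpace_fin] using eLpNorm_fun_norm_addHaar (volume : Measure (Euc N))
    (g := fun s => f (s • e)) (hmeas.comp (measurable_id.smul_const e)) hp0 hp

variable [NormedSpace ℝ F]

theorem Radial.mul_eLpNorm_fderiv_smul_le [CompleteSpace F] {f : Euc N → F} (hf : Radial f)
    (hdf : Differentiable ℝ f) (hdf2 : MemLp (fun x => fderiv ℝ f x) 2 volume) {e : Euc N}
    (he : ‖e‖ = 1) :
    (N * volume (ball (0 : Euc N) 1)) ^ (1 / 2 : ℝ) *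
      eLpNorm (fun s : ℝ => fderiv ℝ f (s • e) e) 2 (radialMeasure (N - 1)) ≤
        ENNReal.ofReal (gradL2norm f) := by
  have : Nontrivial (Euc N) := nontrivial_of_ne e 0 (by rintro rfl; simp at he)
  choose u hu hxu using exists_norm_eq_one_smul_eq (E := Euc N)
  have h_dir : (fun x : Euc N => fderiv ℝ f (‖x‖ • e) e) = fun x => fderiv ℝ f x (u x) :=
    funext fun x => (hf.hasDerivAt_smul hdf he he ‖x‖).unique
      (by simpa [hxu x] using hf.hasDerivAt_smul hdf he (hu x) ‖x‖)
  have h_meas : Measurable fun s : ℝ => ‖fderiv ℝ f (s • e) e‖ₑ :=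
    (continuous_enorm.comp (ContinuousLinearMap.apply ℝ F e).continuous).measurable.comp
      ((measurable_fderiv ℝ f).comp (measurable_id.smul_const e))
  have h_polar := eLpNorm_fun_norm_addHaar (volume : Measure (Euc N)) h_meas two_ne_zero
    ENNReal.ofNat_ne_top
  simp only [finrank_euclideanSpace_fin, ENNReal.toReal_ofNat, h_dir] at h_polar
  exact h_polar ▸ eLpNorm_fderiv_apply_le_gradL2norm hdf2 fun x => (hu x).le

end Radial

theorem Radial.mul_ofReal_pow_mul_norm_sq_le {N : ℕ} {F : Type*} [NormedAddCommGroup F]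
    [InnerProductSpace ℝ F] [CompleteSpace F] {f : Euc N → F} (hf : Radial f) (hH1 : MemH1 f)
    {x : Euc N} (hx : x ≠ 0) :
    N * volume (ball (0 : Euc N) 1) * ENNReal.ofReal (‖x‖ ^ (N - 1) * ‖f x‖ ^ 2) ≤
      2 * eLpNorm f 2 volume * ENNReal.ofReal (gradL2norm f) := by
  obtain ⟨hdf, hf2, hdf2⟩ := hH1
  have : Nontrivial (Euc N) := nontrivial_of_ne x 0 hx
  have hN : 0 < N := by simpa using Module.finrank_pos (R := ℝ) (M := Euc N)
  obtain ⟨e, he⟩ := exists_norm_eq (Euc N) zero_le_one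
  set W : ℝ≥0∞ := ((N : ℝ≥0∞) * volume (ball (0 : Euc N) 1)) ^ (1 / 2 : ℝ)
  set ρ := radialMeasure (N - 1)
  have hW : W * W = N * volume (ball (0 : Euc N) 1) := by
    rw [← ENNReal.rpow_add_of_nonneg _ _ (by norm_num) (by norm_num)]
    norm_num
  have hL : eLpNorm f 2 volume = W * eLpNorm (fun s : ℝ => f (s • e)) 2 ρ := by
    rw [hf.eLpNorm_eq hdf.continuous.enorm.measurable he two_ne_zero ENNReal.ofNat_ne_top,
      ENNReal.toReal_ofNat]
  have h1d := pow_mul_norm_sq_le_two_mul_eLpNorm_mul_eLpNorm (N - 1)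
    (hf.hasDerivAt_smul hdf he he) (fun h_top => hf2.2.ne (by
      rw [hL, h_top, ENNReal.mul_top (by
        simp [W, hN.ne', (measure_ball_pos volume (0 : Euc N) one_pos).ne'])])) (norm_pos_iff.2 hx)
  rw [show f x = f (‖x‖ • e) from hf _ _ (by simp [norm_smul, he]), ← hW, hL]
  calc W * W * ENNReal.ofReal (‖x‖ ^ (N - 1) * ‖f (‖x‖ • e)‖ ^ 2)
      ≤ W * W * (2 * (eLpNorm (fun s : ℝ => f (s • e)) 2 ρ *
          eLpNorm (fun s : ℝ => fderiv ℝ f (s • e) e) 2 ρ)) := by gcongr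
    _ = 2 * (W * eLpNorm (fun s : ℝ => f (s • e)) 2 ρ) *
          (W * eLpNorm (fun s : ℝ => fderiv ℝ f (s • e) e) 2 ρ) := by ring
    _ ≤ _ := by gcongr; exact hf.mul_eLpNorm_fderiv_smul_le hdf hdf2 he

theorem Radial.pow_mul_norm_sq_le {N : ℕ} {F : Type*} [NormedAddCommGroup F]
    [InnerProductSpace ℝ F] [CompleteSpace F] {f : Euc N → F} (hf : Radial f) (hH1 : MemH1 f)
    {x : Euc N} (hx : x ≠ 0) :
    ‖x‖ ^ (N - 1) * ‖f x‖ ^ 2 ≤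
      2 / (N * volume.real (ball (0 : Euc N) 1)) * L2norm f * gradL2norm f := by
  have : Nontrivial (Euc N) := nontrivial_of_ne x 0 hx
  have hN : 0 < N := by simpa using Module.finrank_pos (R := ℝ) (M := Euc N)
  have hV : 0 < (N : ℝ) * volume.real (ball (0 : Euc N) 1) :=
    mul_pos (Nat.cast_pos.2 hN) (ENNReal.toReal_pos (measure_ball_pos _ _ one_pos).ne'
      measure_ball_lt_top.ne)
  have := ENNReal.toReal_mono (ENNReal.mul_ne_top (ENNReal.mul_ne_top ENNReal.ofNat_ne_top
    hH1.2.1.2.ne) ENNReal.ofReal_ne_top) (hf.mul_ofReal_pow_mul_norm_sq_le hH1 hx)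
  rw [div_mul_eq_mul_div, div_mul_eq_mul_div, le_div_iff₀' hV]
  simpa [ENNReal.toReal_mul, L2norm, Measure.real, mul_assoc,
    ENNReal.toReal_ofReal (gradL2norm_nonneg f)] using this

theorem rpow_mul_rpow_le_of_pow_mul_sq_le {k : ℕ} {r R u m b c : ℝ} (hR : 0 < R) (hRr : R ≤ r)
    (hu : 0 ≤ u) (hc : 0 ≤ c) (hexp : b - k * c ≤ 0) (hdecay : r ^ k * u ^ 2 ≤ m) :
    r ^ b * u ^ (2 * c + 2) ≤ R ^ (b - k * c) * m ^ c * u ^ 2 := by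
  have hr : 0 < r := hR.trans_le hRr
  have h_split : r ^ b * u ^ (2 * c + 2) = r ^ (b - k * c) * (r ^ k * u ^ 2) ^ c * u ^ 2 := by
    rw [Real.mul_rpow (by positivity) (by positivity), ← Real.rpow_natCast_mul hr.le,
      ← Real.rpow_natCast_mul hu, Real.rpow_add' hu (by positivity), Real.rpow_two]
    rw [show b = b - k * c + k * c by ring, Real.rpow_add hr]
    push_cast
    ring_nf
  rw [h_split]
  exact mul_le_mul_of_nonneg_right (mul_le_mul (Real.rpow_le_rpow_of_nonpos hR hRr hexp)
    (Real.rpow_le_rpow (by positivity) hdecay hc) (by positivity) (by positivity)) (by positivity)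

theorem setLIntegral_norm_rpow_mul_rpow_le_of_decay {E F : Type*} [NormedAddCommGroup E] [MeasurableSpace E]
    [OpensMeasurableSpace E] (μ : Measure E) [NormedAddCommGroup F] {f : E → F} {k : ℕ}
    {b p R m : ℝ} (hR : 0 < R) (hp : 1 ≤ p) (hexp : b - k * ((p - 1) / 2) ≤ 0)
    (hdecay : ∀ x, R ≤ ‖x‖ → ‖x‖ ^ k * ‖f x‖ ^ 2 ≤ m) :
    ∫⁻ x in {x | R ≤ ‖x‖}, (‖x‖₊ : ℝ≥0∞) ^ b * (‖f x‖₊ : ℝ≥0∞) ^ (p + 1) ∂μ ≤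
      ENNReal.ofReal (R ^ (b - k * ((p - 1) / 2)) * m ^ ((p - 1) / 2)) * eLpNorm f 2 μ ^ 2 := by
  have h_pt : ∀ x ∈ {x : E | R ≤ ‖x‖}, (‖x‖₊ : ℝ≥0∞) ^ b * (‖f x‖₊ : ℝ≥0∞) ^ (p + 1) ≤
      ENNReal.ofReal (R ^ (b - k * ((p - 1) / 2)) * m ^ ((p - 1) / 2)) * ‖f x‖ₑ ^ 2 := by
    intro x (hx : R ≤ ‖x‖)
    have hp1 : p + 1 = 2 * ((p - 1) / 2) + 2 := by ring
    have hm : 0 ≤ m := (by positivity : (0 : ℝ) ≤ ‖x‖ ^ k * ‖f x‖ ^ 2).trans (hdecay x hx)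
    rw [← enorm_eq_nnnorm, ← enorm_eq_nnnorm, ← ofReal_norm, ← ofReal_norm,
      ENNReal.ofReal_rpow_of_pos (hR.trans_le hx),
      ENNReal.ofReal_rpow_of_nonneg (norm_nonneg _) (by linarith),
      ← ENNReal.ofReal_pow (norm_nonneg _), ← ENNReal.ofReal_mul (by positivity),
      ← ENNReal.ofReal_mul (by positivity), hp1]
    exact ENNReal.ofReal_le_ofReal (rpow_mul_rpow_le_of_pow_mul_sq_le hR hx (norm_nonneg _)
      (by linarith) hexp (hdecay x hx))
  rw [eLpNorm_two_sq, ← lintegral_const_mul' _ _ ENNReal.ofReal_ne_top]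
  exact (setLIntegral_mono' (measurableSet_le measurable_const measurable_norm) h_pt).trans
    (setLIntegral_le_lintegral _ _)

theorem radial_tail_estimate_general (N : ℕ) (b p : ℝ) (hN : 2 ≤ N) (hp : 1 < p)
    (hpb : 2 * b < ((N : ℝ) - 1) * (p - 1)) :
    ∃ C : ℝ, 0 < C ∧ ∀ f : Euc N → ℂ, Radial f → MemH1 f → ∀ R : ℝ, 0 < R →
      (∫⁻ x in {x : Euc N | R ≤ ‖x‖}, (‖x‖₊ : ℝ≥0∞) ^ b * (‖f x‖₊ : ℝ≥0∞) ^ (p + 1)) ≤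
        ENNReal.ofReal (C * R ^ (b - ((N : ℝ) - 1) * (p - 1) / 2) *
          gradL2norm f ^ ((p - 1) / 2) * L2norm f ^ ((p + 3) / 2)) := by
  set K : ℝ := 2 / (N * volume.real (ball (0 : Euc N) 1))
  have hK : 0 < K := div_pos two_pos (mul_pos (by positivity) (ENNReal.toReal_pos
    (measure_ball_pos volume _ one_pos).ne' measure_ball_lt_top.ne))
  have hk : ((N - 1 : ℕ) : ℝ) = (N : ℝ) - 1 := by rw [Nat.cast_sub (by omega), Nat.cast_one]
  refine ⟨K ^ ((p - 1) / 2), Real.rpow_pos_of_pos hK _, fun f hf hH1 R hR => ?_⟩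
  have h_tail := setLIntegral_norm_rpow_mul_rpow_le_of_decay volume (b := b) hR hp.le (by rw [hk]; nlinarith)
    fun x hx => hf.pow_mul_norm_sq_le hH1 (norm_pos_iff.1 (hR.trans_le hx))
  have hL : 0 ≤ L2norm f := ENNReal.toReal_nonneg
  rw [← ENNReal.ofReal_toReal hH1.2.1.2.ne, ← ENNReal.ofReal_pow ENNReal.toReal_nonneg,
    ← ENNReal.ofReal_mul (mul_nonneg (Real.rpow_nonneg hR.le _) (Real.rpow_nonneg
      (mul_nonneg (mul_nonneg hK.le hL) (gradL2norm_nonneg f)) _))] at h_tail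
  refine h_tail.trans (ENNReal.ofReal_le_ofReal (le_of_eq ?_))
  rw [hk, Real.mul_rpow (by positivity) (gradL2norm_nonneg f), Real.mul_rpow hK.le hL,
    show (p + 3) / 2 = (p - 1) / 2 + 2 by ring, Real.rpow_add' hL (by linarith), Real.rpow_two,
    show b - ((N : ℝ) - 1) * ((p - 1) / 2) = b - ((N : ℝ) - 1) * (p - 1) / 2 by ring, L2norm]
  ring

/-- Radial Sobolev tail estimate: for radial `H¹` functions,
`∫_{|x| ≥ R} |x|^b |f|^{p+1} ≤ C R^{b-(N-1)(p-1)/2} ‖∇f‖^{(p-1)/2} ‖f‖^{(p+3)/2}`. -/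
theorem radial_tail_estimate (N : ℕ) (b p : ℝ) (hN : 2 ≤ N) (hb : 0 < b) (hp : 1 < p)
    (hpb : 2 * b < ((N : ℝ) - 1) * (p - 1)) :
    ∃ C : ℝ, 0 < C ∧ ∀ f : Euc N → ℂ, Radial f → MemH1 f → ∀ R : ℝ, 0 < R →
      (∫⁻ x in {x : Euc N | R ≤ ‖x‖}, (‖x‖₊ : ℝ≥0∞) ^ b * (‖f x‖₊ : ℝ≥0∞) ^ (p + 1)) ≤
        ENNReal.ofReal (C * R ^ (b - ((N : ℝ) - 1) * (p - 1) / 2) *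
          gradL2norm f ^ ((p - 1) / 2) * L2norm f ^ ((p + 3) / 2)) :=
  radial_tail_estimate_general N b p hN hp hpb
end
end

section
/- Let N ≥ 1 and let φ : ℝ^N → ℂ be differentiable with L = sup_x |∇φ(x)| < ∞ and ∫_{ℝ^N} e^{|y|} |φ(y)|² dy < ∞. Then there exists C > 0 such that e^{|x|} |φ(x)|^{N+2} ≤ C for all x ∈ ℝ^N; in particular |φ(x)| ≤ C' e^{−|x|/(N+2)} for some C' > 0 and all x. -/
open MeasureTheory Filter
open scoped ENNReal NNReal BigOperators

noncomputable section

/-!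
A bounded gradient makes `φ` `L`-Lipschitz, so on the closed ball of radius
`r ≤ min 1 (|φ x| / 2L)` around `x` we have `|φ| ≥ |φ x| / 2` and `e^{|y|} ≥ e^{|x| - 1}`.
The weighted integral therefore dominates `e^{|x|} |φ x|² r^N` up to a constant.
With `r = 1` this shows that `φ` is bounded; after enlarging `L` to `sup |φ| / 2`, the radius
`r = |φ x| / 2L` is always admissible and gives `e^{|x|} |φ x|^{N+2} ≲ 1`.
-/

open Metric Module

section WeightedBall

variable {E F : Type*} [NormedAddCommGroup E] [NormedAddCommGroup F]

lemma exp_sub_one_le_exp_norm_of_mem_closedBall {x y : E} {r : ℝ} (hr : r ≤ 1)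
    (hy : y ∈ closedBall x r) : Real.exp (‖x‖ - 1) ≤ Real.exp ‖y‖ := by
  rw [mem_closedBall, dist_eq_norm] at hy
  have := norm_sub_norm_le x y
  rw [norm_sub_rev] at this
  exact Real.exp_le_exp.2 (by linarith)

lemma LipschitzWith.half_norm_le_norm_of_mem_closedBall {K : ℝ≥0} {φ : E → F}
    (hφ : LipschitzWith K φ) {x y : E} {r : ℝ} (hKr : K * r ≤ ‖φ x‖ / 2)
    (hy : y ∈ closedBall x r) : ‖φ x‖ / 2 ≤ ‖φ y‖ := by
  have hdist : ‖φ x - φ y‖ ≤ K * r := by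
    rw [← dist_eq_norm, dist_comm]
    exact hφ.dist_le_mul_of_le hy
  have := norm_sub_norm_le (φ x) (φ y)
  linarith

variable [NormedSpace ℝ E] [FiniteDimensional ℝ E] [MeasurableSpace E] [BorelSpace E]
  (μ : Measure E) [μ.IsAddHaarMeasure]

lemma exp_mul_sq_mul_measureReal_closedBall_le {K : ℝ≥0} {φ : E → F} (hφ : LipschitzWith K φ)
    (hint : Integrable (fun y => Real.exp ‖y‖ * ‖φ y‖ ^ 2) μ) (x : E) {r : ℝ} (hr : r ≤ 1)
    (hKr : K * r ≤ ‖φ x‖ / 2) :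
    Real.exp (‖x‖ - 1) * (‖φ x‖ / 2) ^ 2 * μ.real (closedBall x r) ≤
      ∫ y, Real.exp ‖y‖ * ‖φ y‖ ^ 2 ∂μ := by
  have hlow : ∀ y ∈ closedBall x r,
      Real.exp (‖x‖ - 1) * (‖φ x‖ / 2) ^ 2 ≤ Real.exp ‖y‖ * ‖φ y‖ ^ 2 := fun y hy =>
    mul_le_mul (exp_sub_one_le_exp_norm_of_mem_closedBall hr hy)
      (pow_le_pow_left₀ (by positivity) (hφ.half_norm_le_norm_of_mem_closedBall hKr hy) 2)
      (by positivity) (Real.exp_pos _).le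
  calc Real.exp (‖x‖ - 1) * (‖φ x‖ / 2) ^ 2 * μ.real (closedBall x r)
      ≤ ∫ y in closedBall x r, Real.exp ‖y‖ * ‖φ y‖ ^ 2 ∂μ :=
        setIntegral_ge_of_const_le_real measurableSet_closedBall measure_closedBall_lt_top.ne
          hlow hint.integrableOn
    _ ≤ ∫ y, Real.exp ‖y‖ * ‖φ y‖ ^ 2 ∂μ :=
        setIntegral_le_integral hint (.of_forall fun y => by positivity)

lemma exp_mul_sq_mul_pow_le {K : ℝ≥0} {φ : E → F} (hφ : LipschitzWith K φ)
    (hint : Integrable (fun y => Real.exp ‖y‖ * ‖φ y‖ ^ 2) μ) (x : E) {r : ℝ} (hr0 : 0 ≤ r)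
    (hr1 : r ≤ 1) (hKr : K * r ≤ ‖φ x‖ / 2) :
    Real.exp ‖x‖ * ‖φ x‖ ^ 2 * r ^ finrank ℝ E ≤
      4 * Real.exp 1 * (∫ y, Real.exp ‖y‖ * ‖φ y‖ ^ 2 ∂μ) / μ.real (closedBall 0 1) := by
  have hc : 0 < μ.real (closedBall (0 : E) 1) :=
    ENNReal.toReal_pos (measure_closedBall_pos μ 0 one_pos).ne' measure_closedBall_lt_top.ne
  have h := exp_mul_sq_mul_measureReal_closedBall_le μ hφ hint x hr1 hKr
  rw [Measure.addHaar_real_closedBall' μ x hr0, Real.exp_sub] at h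
  rw [le_div_iff₀ hc]
  calc Real.exp ‖x‖ * ‖φ x‖ ^ 2 * r ^ finrank ℝ E * μ.real (closedBall 0 1)
      = 4 * Real.exp 1 * (Real.exp ‖x‖ / Real.exp 1 * (‖φ x‖ / 2) ^ 2 *
          (r ^ finrank ℝ E * μ.real (closedBall 0 1))) := by
        field_simp; ring
    _ ≤ _ := by gcongr

lemma LipschitzWith.exists_norm_le_of_integrable_exp_mul_sq {K : ℝ≥0} {φ : E → F}
    (hφ : LipschitzWith K φ) (hint : Integrable (fun y => Real.exp ‖y‖ * ‖φ y‖ ^ 2) μ) :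
    ∃ M, 0 < M ∧ ∀ x, ‖φ x‖ ≤ M := by
  set A := 4 * Real.exp 1 * (∫ y, Real.exp ‖y‖ * ‖φ y‖ ^ 2 ∂μ) / μ.real (closedBall 0 1)
  refine ⟨max (max (2 * K) 1) A, by positivity, fun x => ?_⟩
  by_contra! hx
  simp only [max_lt_iff] at hx
  obtain ⟨⟨h2K, h1⟩, hA⟩ := hx
  have hsq : Real.exp ‖x‖ * ‖φ x‖ ^ 2 ≤ A := by
    simpa using exp_mul_sq_mul_pow_le μ hφ hint x zero_le_one le_rfl (by linarith)
  have hexp : ‖φ x‖ ^ 2 ≤ Real.exp ‖x‖ * ‖φ x‖ ^ 2 :=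
    le_mul_of_one_le_left (sq_nonneg _) (Real.one_le_exp (norm_nonneg x))
  nlinarith

lemma LipschitzWith.exists_exp_mul_pow_le_of_integrable_exp_mul_sq {K : ℝ≥0} {φ : E → F}
    (hφ : LipschitzWith K φ) (hint : Integrable (fun y => Real.exp ‖y‖ * ‖φ y‖ ^ 2) μ) :
    ∃ C, 0 < C ∧ ∀ x, Real.exp ‖x‖ * ‖φ x‖ ^ (finrank ℝ E + 2) ≤ C := by
  obtain ⟨M, hM, hφM⟩ := hφ.exists_norm_le_of_integrable_exp_mul_sq μ hint
  set A := 4 * Real.exp 1 * (∫ y, Real.exp ‖y‖ * ‖φ y‖ ^ 2 ∂μ) / μ.real (closedBall 0 1)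
  have hA : 0 ≤ A := by
    have : 0 ≤ ∫ y, Real.exp ‖y‖ * ‖φ y‖ ^ 2 ∂μ := integral_nonneg fun y => by positivity
    positivity
  -- enlarging the Lipschitz constant to `M / 2` makes the radius `‖φ x‖ / (2 K')` at most `1`
  set K' : ℝ := max K (M / 2)
  have hK' : 0 < K' := lt_max_of_lt_right (by positivity)
  refine ⟨max (A * (2 * K') ^ finrank ℝ E) 1, by positivity, fun x => ?_⟩
  have hr1 : ‖φ x‖ / (2 * K') ≤ 1 := by
    rw [div_le_one (by positivity)]
    linarith [hφM x, le_max_right (K : ℝ) (M / 2)]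
  have hKr : K * (‖φ x‖ / (2 * K')) ≤ ‖φ x‖ / 2 := by
    calc K * (‖φ x‖ / (2 * K')) ≤ K' * (‖φ x‖ / (2 * K')) := by gcongr; exact le_max_left _ _
      _ = ‖φ x‖ / 2 := by field_simp
  have h := exp_mul_sq_mul_pow_le μ hφ hint x (by positivity) hr1 hKr
  rw [div_pow, ← mul_div_assoc, div_le_iff₀ (by positivity)] at h
  calc Real.exp ‖x‖ * ‖φ x‖ ^ (finrank ℝ E + 2)
      = Real.exp ‖x‖ * ‖φ x‖ ^ 2 * ‖φ x‖ ^ finrank ℝ E := by ring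
    _ ≤ A * (2 * K') ^ finrank ℝ E := h
    _ ≤ _ := le_max_left _ _

end WeightedBall

lemma le_rpow_inv_mul_exp_of_exp_mul_pow_le {a t C : ℝ} {n : ℕ} (ha : 0 ≤ a) (hn : n ≠ 0)
    (h : Real.exp t * a ^ n ≤ C) : a ≤ C ^ (n : ℝ)⁻¹ * Real.exp (-t / n) := by
  have hpow : a ^ n ≤ C * Real.exp (-t) := by
    rw [Real.exp_neg, ← div_eq_mul_inv, le_div_iff₀ (Real.exp_pos t), mul_comm]
    exact h
  calc a = (a ^ n) ^ (n : ℝ)⁻¹ := (Real.pow_rpow_inv_natCast ha hn).symm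
    _ ≤ (C * Real.exp (-t)) ^ (n : ℝ)⁻¹ := by gcongr
    _ = C ^ (n : ℝ)⁻¹ * Real.exp (-t / n) := by
      have hC : 0 ≤ C := (by positivity : 0 ≤ Real.exp t * a ^ n).trans h
      rw [Real.mul_rpow hC (Real.exp_pos _).le, ← Real.exp_mul, div_eq_mul_inv]

theorem decay_from_weighted_L2_general (N : ℕ) (φ : Euc N → ℂ)
    (hdiff : Differentiable ℝ φ)
    (hgradbd : ∃ L : ℝ, ∀ x : Euc N, ‖fderiv ℝ φ x‖ ≤ L)
    (hint : Integrable (fun y : Euc N => Real.exp ‖y‖ * ‖φ y‖ ^ 2)) :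
    (∃ C : ℝ, 0 < C ∧ ∀ x : Euc N, Real.exp ‖x‖ * ‖φ x‖ ^ (N + 2) ≤ C) ∧
      ∃ C' : ℝ, 0 < C' ∧ ∀ x : Euc N, ‖φ x‖ ≤ C' * Real.exp (-‖x‖ / ((N : ℝ) + 2)) := by
  obtain ⟨L, hL⟩ := hgradbd
  have hφ : LipschitzWith L.toNNReal φ := lipschitzWith_of_nnnorm_fderiv_le hdiff fun x => by
    rw [← NNReal.coe_le_coe, Real.coe_toNNReal', coe_nnnorm]
    exact (hL x).trans (le_max_left _ _)
  obtain ⟨C, hC, hbound⟩ := hφ.exists_exp_mul_pow_le_of_integrable_exp_mul_sq volume hint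
  rw [finrank_euclideanSpace_fin] at hbound
  refine ⟨⟨C, hC, hbound⟩, C ^ ((N : ℝ) + 2)⁻¹, by positivity, fun x => ?_⟩
  exact_mod_cast le_rpow_inv_mul_exp_of_exp_mul_pow_le (norm_nonneg _) (by omega) (hbound x)

/-- Pointwise exponential decay from an exponentially weighted `L²` bound and a Lipschitz
bound: if `∇φ` is bounded and `∫ e^{|y|}|φ(y)|² dy < ∞`, then `e^{|x|}|φ(x)|^{N+2}` is
bounded, so `|φ(x)| ≲ e^{-|x|/(N+2)}` (part of the proof of Lemma 2.9 of the paper). -/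
theorem decay_from_weighted_L2 (N : ℕ) (hN : 1 ≤ N) (φ : Euc N → ℂ)
    (hdiff : Differentiable ℝ φ)
    (hgradbd : ∃ L : ℝ, ∀ x : Euc N, ‖fderiv ℝ φ x‖ ≤ L)
    (hint : Integrable (fun y : Euc N => Real.exp ‖y‖ * ‖φ y‖ ^ 2)) :
    (∃ C : ℝ, 0 < C ∧ ∀ x : Euc N, Real.exp ‖x‖ * ‖φ x‖ ^ (N + 2) ≤ C) ∧
      ∃ C' : ℝ, 0 < C' ∧ ∀ x : Euc N, ‖φ x‖ ≤ C' * Real.exp (-‖x‖ / ((N : ℝ) + 2)) :=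
  decay_from_weighted_L2_general N φ hdiff hgradbd hint
end
end
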